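/- arXiv:math/0206186 — 7 statements merged into one kernel-verified Lean document; each statement's English description precedes it below -/
import Mathlib

section
/- Let Q be in the class F of nonnegative, positively homogeneous, concave functions on ℝ_{≥0}^n, let P be its gauge transform, and suppose Q(q) = 1 and p lies in the superdifferential ∂Q(q). Then P(p) = 1 and q ∈ ∂P(p). -/
/-!
For a positively homogeneous `Q`, comparing `Q` at `0`, `q` and `2 • q` through the
superdifferential inequality forces `p ⬝ᵥ q = Q q = 1`, and then `Q x ≤ x ⬝ᵥ p` on the whole
orthant. So every quotient in the infimum defining `P p` is at least `1`, while `q` attains `1`.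
For any other `p' ≥ 0`, the candidate `q` bounds `P p'` by `q ⬝ᵥ p'`, which is the
superdifferential inequality for `P` at `p`.
-/

open Finset

section Superdifferential

variable {ι : Type*} [Fintype ι] {Q : (ι → ℝ) → ℝ} {p q : ι → ℝ}

/-- Euler's identity for a supergradient of a positively homogeneous function. -/
theorem dotProduct_eq_of_superdifferential
    (hQhom : ∀ l : ℝ, 0 ≤ l → ∀ x : ι → ℝ, 0 ≤ x → Q (l • x) = l * Q x) (hq : 0 ≤ q)
    (hp : ∀ x : ι → ℝ, 0 ≤ x → Q x - Q q ≤ p ⬝ᵥ (x - q)) :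
    p ⬝ᵥ q = Q q := by
  have along_ray : ∀ l : ℝ, 0 ≤ l → (l - 1) * Q q ≤ (l - 1) * p ⬝ᵥ q := by
    intro l hl
    have h := hp (l • q) (smul_nonneg hl hq)
    rw [hQhom l hl q hq, dotProduct_sub, dotProduct_smul, smul_eq_mul] at h
    linarith
  have h₂ := along_ray 2 (by norm_num)
  have h₀ := along_ray 0 le_rfl
  linarith

theorem le_dotProduct_of_superdifferential
    (hQhom : ∀ l : ℝ, 0 ≤ l → ∀ x : ι → ℝ, 0 ≤ x → Q (l • x) = l * Q x) (hq : 0 ≤ q)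
    (hp : ∀ x : ι → ℝ, 0 ≤ x → Q x - Q q ≤ p ⬝ᵥ (x - q)) {x : ι → ℝ} (hx : 0 ≤ x) :
    Q x ≤ x ⬝ᵥ p := by
  have h := hp x hx
  rw [dotProduct_sub, dotProduct_eq_of_superdifferential hQhom hq hp, dotProduct_comm] at h
  linarith

end Superdifferential

section Gauge

variable {ι : Type*} [Fintype ι] {Q : (ι → ℝ) → ℝ} {p q : ι → ℝ} {c : ℝ}

def gaugeQuotients (Q : (ι → ℝ) → ℝ) (p : ι → ℝ) : Set ℝ :=
  {r | ∃ q' : ι → ℝ, 0 ≤ q' ∧ 0 < Q q' ∧ r = q' ⬝ᵥ p / Q q'}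

noncomputable def gaugeTransform (Q : (ι → ℝ) → ℝ) (p : ι → ℝ) : ℝ :=
  sInf (gaugeQuotients Q p)

theorem bddBelow_gaugeQuotients (hc : ∀ x : ι → ℝ, 0 ≤ x → c * Q x ≤ x ⬝ᵥ p) :
    BddBelow (gaugeQuotients Q p) := by
  refine ⟨c, ?_⟩
  rintro r ⟨q', hq', hQq', rfl⟩
  exact (le_div_iff₀ hQq').2 (hc q' hq')

theorem gaugeTransform_le (hc : ∀ x : ι → ℝ, 0 ≤ x → c * Q x ≤ x ⬝ᵥ p) (hq : 0 ≤ q)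
    (hQq : 0 < Q q) :
    gaugeTransform Q p ≤ q ⬝ᵥ p / Q q :=
  csInf_le (bddBelow_gaugeQuotients hc) ⟨q, hq, hQq, rfl⟩

theorem le_gaugeTransform (hc : ∀ x : ι → ℝ, 0 ≤ x → c * Q x ≤ x ⬝ᵥ p) (hq : 0 ≤ q)
    (hQq : 0 < Q q) :
    c ≤ gaugeTransform Q p := by
  refine le_csInf ⟨_, q, hq, hQq, rfl⟩ ?_
  rintro r ⟨q', hq', hQq', rfl⟩
  exact (le_div_iff₀ hQq').2 (hc q' hq')

theorem gaugeTransform_le_dotProduct (hp : 0 ≤ p) (hq : 0 ≤ q) (hQq : Q q = 1) :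
    gaugeTransform Q p ≤ q ⬝ᵥ p := by
  have h := gaugeTransform_le (c := 0) (fun x hx => by
    simpa using dotProduct_nonneg_of_nonneg hx hp) hq (hQq ▸ one_pos)
  rwa [hQq, div_one] at h

end Gauge

theorem blocking_pair_general (n : ℕ)
    (Q P : (Fin n → ℝ) → ℝ)
    (hQhom : ∀ (l : ℝ), 0 ≤ l → ∀ x : Fin n → ℝ, (∀ i, 0 ≤ x i) → Q (l • x) = l * Q x)
    (hP : ∀ p : Fin n → ℝ, P p =
      sInf {r : ℝ | ∃ q' : Fin n → ℝ, (∀ i, 0 ≤ q' i) ∧ 0 < Q q' ∧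
        r = (∑ i, q' i * p i) / Q q'})
    (q : Fin n → ℝ) (hq : ∀ i, 0 ≤ q i) (hQq : Q q = 1)
    (p : Fin n → ℝ)
    (hp : ∀ x : Fin n → ℝ, (∀ i, 0 ≤ x i) →
      Q x - Q q ≤ ∑ i, p i * (x i - q i)) :
    P p = 1 ∧
    ∀ p' : Fin n → ℝ, (∀ i, 0 ≤ p' i) →
      P p' - P p ≤ ∑ i, q i * (p' i - p i) := by
  obtain rfl : P = gaugeTransform Q := funext hP
  have hQq_pos : 0 < Q q := hQq ▸ one_pos
  have hpq : q ⬝ᵥ p = 1 := by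
    rw [dotProduct_comm, dotProduct_eq_of_superdifferential hQhom hq hp, hQq]
  have hPp : gaugeTransform Q p = 1 := by
    have hbound : ∀ x : Fin n → ℝ, 0 ≤ x → 1 * Q x ≤ x ⬝ᵥ p := fun x hx => by
      simpa using le_dotProduct_of_superdifferential hQhom hq hp hx
    refine le_antisymm ?_ (le_gaugeTransform hbound hq hQq_pos)
    simpa [hQq, hpq] using gaugeTransform_le hbound hq hQq_pos
  refine ⟨hPp, fun p' hp' => ?_⟩
  have h := gaugeTransform_le_dotProduct hp' hq hQq
  change _ ≤ q ⬝ᵥ (p' - p)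
  rw [dotProduct_sub, hpq, hPp]
  linarith

/-- Blocking pair lemma: if `Q ∈ F`, `P` is its gauge transform, `Q q = 1`
and `p ∈ ∂Q(q)` (superdifferential), then `P p = 1` and `q ∈ ∂P(p)`. -/
theorem blocking_pair (n : ℕ)
    (Q P : (Fin n → ℝ) → ℝ)
    (hQnonneg : ∀ x : Fin n → ℝ, (∀ i, 0 ≤ x i) → 0 ≤ Q x)
    (hQhom : ∀ (l : ℝ), 0 ≤ l → ∀ x : Fin n → ℝ, (∀ i, 0 ≤ x i) → Q (l • x) = l * Q x)
    (hQconc : ConcaveOn ℝ {x : Fin n → ℝ | ∀ i, 0 ≤ x i} Q)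
    (hP : ∀ p : Fin n → ℝ, P p =
      sInf {r : ℝ | ∃ q' : Fin n → ℝ, (∀ i, 0 ≤ q' i) ∧ 0 < Q q' ∧
        r = (∑ i, q' i * p i) / Q q'})
    (q : Fin n → ℝ) (hq : ∀ i, 0 ≤ q i) (hQq : Q q = 1)
    (p : Fin n → ℝ) (hpnn : ∀ i, 0 ≤ p i)
    (hp : ∀ x : Fin n → ℝ, (∀ i, 0 ≤ x i) →
      Q x - Q q ≤ ∑ i, p i * (x i - q i)) :
    P p = 1 ∧
    ∀ p' : Fin n → ℝ, (∀ i, 0 ≤ p' i) →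
      P p' - P p ≤ ∑ i, q i * (p' i - p i) :=
  blocking_pair_general n Q P hQhom hP q hq hQq p hp
end

section
/- Given market statistics {(p^t, q^t)}_{t=1}^T with p^t, q^t ∈ ℝ_{>0}^n, if the linear system λ_t (p^t·q^t) ≤ λ_τ (p^τ·q^t), λ_t > 0 for all t, τ, is consistent, then the function Q(q) = min_{i=1..T} λ_i (p^i·q) rationalizes the statistics: for each t, q^t maximizes Q over {q ≥ 0 : p^t·q ≤ p^t·q^t}. -/
open Finset

theorem Finset.inf'_le_inf'_of_le_of_forall_le {ι α : Type*} [SemilatticeInf α] {s : Finset ι}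
    (hs : s.Nonempty) {f g : ι → α} {t : ι} (ht : t ∈ s) (hfg : f t ≤ g t)
    (hg : ∀ τ ∈ s, g t ≤ g τ) : s.inf' hs f ≤ s.inf' hs g :=
  calc s.inf' hs f ≤ f t := inf'_le f ht
    _ ≤ g t := hfg
    _ ≤ s.inf' hs g := le_inf' hs g hg

theorem afriat_utility_rationalizes_general (n T : ℕ)
    (p q : Fin (T + 1) → Fin n → ℝ)
    (l : Fin (T + 1) → ℝ) (hl : ∀ t, 0 < l t)
    (hsys : ∀ t τ : Fin (T + 1),
      l t * (∑ i, p t i * q t i) ≤ l τ * (∑ i, p τ i * q t i))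
    (Q : (Fin n → ℝ) → ℝ)
    (hQ : ∀ x : Fin n → ℝ,
      Q x = Finset.univ.inf' Finset.univ_nonempty
        (fun i : Fin (T + 1) => l i * ∑ j, p i j * x j)) :
    ∀ t : Fin (T + 1), ∀ x : Fin n → ℝ, (∀ i, 0 ≤ x i) →
      (∑ i, p t i * x i) ≤ (∑ i, p t i * q t i) → Q x ≤ Q (q t) := by
  intro t x _ hbudget
  rw [hQ x, hQ (q t)]
  exact inf'_le_inf'_of_le_of_forall_le _ (mem_univ t)
    (mul_le_mul_of_nonneg_left hbudget (hl t).le) fun τ _ => hsys t τ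

/-- Afriat construction: if the linear system `λ_t (p^t·q^t) ≤ λ_τ (p^τ·q^t)`
with `λ_t > 0` is consistent, then `Q(x) = min_i λ_i (p^i·x)` rationalizes the
market statistics: each `q^t` maximizes `Q` over the budget set
`{x ≥ 0 : p^t·x ≤ p^t·q^t}`. -/
theorem afriat_utility_rationalizes (n T : ℕ)
    (p q : Fin (T + 1) → Fin n → ℝ)
    (hp : ∀ t i, 0 < p t i) (hq : ∀ t i, 0 < q t i)
    (l : Fin (T + 1) → ℝ) (hl : ∀ t, 0 < l t)
    (hsys : ∀ t τ : Fin (T + 1),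
      l t * (∑ i, p t i * q t i) ≤ l τ * (∑ i, p τ i * q t i))
    (Q : (Fin n → ℝ) → ℝ)
    (hQ : ∀ x : Fin n → ℝ,
      Q x = Finset.univ.inf' Finset.univ_nonempty
        (fun i : Fin (T + 1) => l i * ∑ j, p i j * x j)) :
    ∀ t : Fin (T + 1), ∀ x : Fin n → ℝ, (∀ i, 0 ≤ x i) →
      (∑ i, p t i * x i) ≤ (∑ i, p t i * q t i) → Q x ≤ Q (q t) :=
  afriat_utility_rationalizes_general n T p q l hl hsys Q hQ
end

section
/- If the market statistics {(p^t, q^t)}_{t=1}^T is rationalizable by some Q ∈ F with Q(q^t) > 0 for all t, then for any ordered tuple t(1),…,t(k) of indices, (p^{t(1)}·q^{t(2)})(p^{t(2)}·q^{t(3)})⋯(p^{t(k)}·q^{t(1)}) ≥ (p^{t(1)}·q^{t(1)})(p^{t(2)}·q^{t(2)})⋯(p^{t(k)}·q^{t(k)}). -/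
open Finset

/-- Cyclic successor on `Fin k`. -/
def cyc {k : ℕ} (i : Fin k) : Fin k := ⟨(i.val + 1) % k, Nat.mod_lt _ i.pos⟩

/-!
Let `c t = Q (q^t)`. Rescaling `q^{t'}` to cost `p^t·q^t` at prices `p^t` makes it affordable
at `t`, so homogeneity and optimality of `q^t` give `(p^t·q^t) c_{t'} ≤ (p^t·q^{t'}) c_t`.
Multiplying these inequalities around the cycle, the factors `c` appear once on each side and
cancel, which is the homogeneous axiom.
-/

open Matrix

theorem cyc_eq_finRotate {k : ℕ} (i : Fin k) : cyc i = finRotate k i := by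
  have := i.neZero
  rw [finRotate_apply]
  ext
  simp only [cyc, Fin.val_add, Fin.val_one', Nat.add_mod_mod]

theorem prod_le_prod_of_mul_le_mul_perm {ι : Type*} [Fintype ι] {a b c : ι → ℝ}
    (σ : Equiv.Perm ι) (ha : ∀ i, 0 ≤ a i) (hc : ∀ i, 0 < c i)
    (h : ∀ i, a i * c (σ i) ≤ b i * c i) : ∏ i, a i ≤ ∏ i, b i := by
  have hprod : ∏ i, a i * c (σ i) ≤ ∏ i, b i * c i :=
    prod_le_prod (fun i _ => mul_nonneg (ha i) (hc _).le) fun i _ => h i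
  rw [prod_mul_distrib, prod_mul_distrib, Equiv.prod_comp σ c] at hprod
  exact le_of_mul_le_mul_right hprod (prod_pos fun i _ => hc i)

theorem dotProduct_mul_le_of_isMaximizer {ι : Type*} [Fintype ι] {Q : (ι → ℝ) → ℝ}
    {p x y : ι → ℝ}
    (hQhom : ∀ l : ℝ, 0 ≤ l → ∀ z : ι → ℝ, (∀ i, 0 ≤ z i) → Q (l • z) = l * Q z)
    (hmax : ∀ z : ι → ℝ, (∀ i, 0 ≤ z i) → p ⬝ᵥ z ≤ p ⬝ᵥ x → Q z ≤ Q x)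
    (hy : ∀ i, 0 ≤ y i) (hpx : 0 ≤ p ⬝ᵥ x) (hpy : 0 < p ⬝ᵥ y) :
    (p ⬝ᵥ x) * Q y ≤ (p ⬝ᵥ y) * Q x := by
  set l := (p ⬝ᵥ x) / (p ⬝ᵥ y)
  have hl : 0 ≤ l := div_nonneg hpx hpy.le
  have hcost : p ⬝ᵥ (l • y) = p ⬝ᵥ x := by
    rw [dotProduct_smul, smul_eq_mul, div_mul_cancel₀ _ hpy.ne']
  have hQ : l * Q y ≤ Q x := by
    rw [← hQhom l hl y hy]
    exact hmax _ (fun i => mul_nonneg hl (hy i)) hcost.le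
  rwa [div_mul_eq_mul_div, div_le_iff₀' hpy] at hQ

theorem rationalizable_implies_homogeneous_axiom_general (n T : ℕ)
    (p q : Fin (T + 1) → Fin n → ℝ)
    (hp : ∀ t i, 0 < p t i) (hq : ∀ t i, 0 < q t i)
    (Q : (Fin n → ℝ) → ℝ)
    (hQhom : ∀ (l : ℝ), 0 ≤ l → ∀ x : Fin n → ℝ, (∀ i, 0 ≤ x i) → Q (l • x) = l * Q x)
    (hQpos : ∀ t, 0 < Q (q t))
    (hrat : ∀ t : Fin (T + 1), ∀ x : Fin n → ℝ, (∀ i, 0 ≤ x i) →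
      (∑ i, p t i * x i) ≤ (∑ i, p t i * q t i) → Q x ≤ Q (q t)) :
    ∀ (k : ℕ) (t : Fin k → Fin (T + 1)),
      (∏ i : Fin k, ∑ j, p (t i) j * q (t (cyc i)) j) ≥
      (∏ i : Fin k, ∑ j, p (t i) j * q (t i) j) := by
  intro k t
  rcases Nat.eq_zero_or_pos n with rfl | hn
  · simp
  have hcost_pos : ∀ s s', 0 < p s ⬝ᵥ q s' := fun s s' =>
    sum_pos (fun j _ => mul_pos (hp s j) (hq s' j)) (univ_nonempty_iff.mpr ⟨⟨0, hn⟩⟩)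
  refine prod_le_prod_of_mul_le_mul_perm (finRotate k) (c := fun i => Q (q (t i)))
    (fun i => (hcost_pos _ _).le) (fun i => hQpos _) fun i => ?_
  rw [← cyc_eq_finRotate]
  exact dotProduct_mul_le_of_isMaximizer hQhom (hrat (t i)) (fun j => (hq _ j).le)
    (hcost_pos _ _).le (hcost_pos _ _)

/-- If the market statistics is rationalizable by a nonnegative, positively
homogeneous, concave utility `Q` with `Q (q^t) > 0`, then the strong
homogeneous axiom of revealed preference holds: for any ordered tuple of
indices, the cyclic product `∏ (p^{t(i)}·q^{t(i+1)})` dominates the diagonal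
product `∏ (p^{t(i)}·q^{t(i)})`. -/
theorem rationalizable_implies_homogeneous_axiom (n T : ℕ)
    (p q : Fin (T + 1) → Fin n → ℝ)
    (hp : ∀ t i, 0 < p t i) (hq : ∀ t i, 0 < q t i)
    (Q : (Fin n → ℝ) → ℝ)
    (hQnonneg : ∀ x : Fin n → ℝ, (∀ i, 0 ≤ x i) → 0 ≤ Q x)
    (hQhom : ∀ (l : ℝ), 0 ≤ l → ∀ x : Fin n → ℝ, (∀ i, 0 ≤ x i) → Q (l • x) = l * Q x)
    (hQconc : ConcaveOn ℝ {x : Fin n → ℝ | ∀ i, 0 ≤ x i} Q)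
    (hQpos : ∀ t, 0 < Q (q t))
    (hrat : ∀ t : Fin (T + 1), ∀ x : Fin n → ℝ, (∀ i, 0 ≤ x i) →
      (∑ i, p t i * x i) ≤ (∑ i, p t i * q t i) → Q x ≤ Q (q t)) :
    ∀ (k : ℕ) (t : Fin k → Fin (T + 1)),
      (∏ i : Fin k, ∑ j, p (t i) j * q (t (cyc i)) j) ≥
      (∏ i : Fin k, ∑ j, p (t i) j * q (t i) j) :=
  rationalizable_implies_homogeneous_axiom_general n T p q hp hq Q hQhom hQpos hrat
end

section
/- Let K ⊆ ℝ^n be a closed convex set with nonempty boundary, and for each boundary point y let n(y) be a unit outer normal at y. Define q-ind_K(x) = 1 for x ∈ K and q-ind_K(x) = inf_{y ∈ Bd(K)} (1 − n(y)·(x − y)) otherwise. Then q-ind_K is a concave function on ℝ^n. -/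
/-!
Every `1 - ⟪ν y, · - y⟫` with `y ∈ ∂K` is an affine majorant of the quasi-indicator `q`: on `K`
because `ν y` is an outer normal, off `K` because `q` is their infimum there. Hence
`a q x + b q z ≤ 1 - ⟪ν y, (a x + b z) - y⟫` for all `y ∈ ∂K`, which is the concavity inequality
at `w = a x + b z` when `w ∉ K` (take the infimum over `y`) or `w ∈ ∂K` (take `y = w`).
If `w` lies in the interior of `K`, then `q ≤ 1` everywhere: for `x ∉ K` the segment `[x, w]` leaves
`K` at some `y ∈ ∂K` with `y ≠ w`, and the outer normal at `y` makes an acute angle with `x - y`.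
-/

open scoped InnerProductSpace

theorem IsPreconnected.inter_frontier_nonempty {X : Type*} [TopologicalSpace X] {s t : Set X}
    (ht : IsPreconnected t) (hts : (t ∩ s).Nonempty) (hts' : (t \ s).Nonempty) :
    (t ∩ frontier s).Nonempty := by
  by_contra hfr
  rw [Set.not_nonempty_iff_eq_empty] at hfr
  have hcover : t ⊆ interior s ∪ (closure s)ᶜ := fun p hp => by
    by_cases hint : p ∈ interior s
    · exact Or.inl hint
    · exact Or.inr fun hcl => hfr.subset ⟨hp, hcl, hint⟩
  obtain ⟨a, hat, has⟩ := hts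
  obtain ⟨b, hbt, hbs⟩ := hts'
  have hain : a ∈ interior s :=
    (hcover hat).resolve_right fun h => h (subset_closure has)
  have hbout : b ∈ (closure s)ᶜ :=
    (hcover hbt).resolve_left fun h => hbs (interior_subset h)
  obtain ⟨p, -, hpint, hpcl⟩ := ht _ _ isOpen_interior isClosed_closure.isOpen_compl hcover
    ⟨a, hat, hain⟩ ⟨b, hbt, hbout⟩
  exact hpcl (subset_closure (interior_subset hpint))

section InnerProductSpace

variable {E : Type*} [NormedAddCommGroup E] [InnerProductSpace ℝ E]

theorem inner_sub_nonneg_of_mem_segment {v x y w : E} (hy : y ∈ segment ℝ x w) (hyw : y ≠ w)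
    (hw : ⟪v, w - y⟫_ℝ ≤ 0) : 0 ≤ ⟪v, x - y⟫_ℝ := by
  obtain ⟨r, hr, hxy⟩ :=
    (mem_segment_iff_sameRay.mp hy).exists_nonneg_right (sub_ne_zero.mpr hyw.symm)
  have hinner : ⟪v, x - y⟫_ℝ = -(r * ⟪v, w - y⟫_ℝ) := by
    rw [← neg_sub, hxy, inner_neg_right, real_inner_smul_right]
  rw [hinner, neg_nonneg]
  exact mul_nonpos_of_nonneg_of_nonpos hr hw

theorem inner_convexCombo_sub {a b : ℝ} (hab : a + b = 1) (v x y z : E) :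
    ⟪v, (a • x + b • z) - y⟫_ℝ = a * ⟪v, x - y⟫_ℝ + b * ⟪v, z - y⟫_ℝ := by
  have hsplit : (a • x + b • z) - y = a • (x - y) + b • (z - y) := by
    obtain rfl : a = 1 - b := by linarith
    module
  rw [hsplit, inner_add_right, real_inner_smul_right, real_inner_smul_right]

open Classical in
noncomputable def quasiIndicator (K : Set E) (ν : E → E) (x : E) : ℝ :=
  if x ∈ K then 1 else sInf {r : ℝ | ∃ y ∈ frontier K, r = 1 - ⟪ν y, x - y⟫_ℝ}

variable {K : Set E} {ν : E → E}

theorem quasiIndicator_of_mem {x : E} (hx : x ∈ K) : quasiIndicator K ν x = 1 := if_pos hx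

theorem quasiIndicator_of_notMem {x : E} (hx : x ∉ K) :
    quasiIndicator K ν x = sInf {r : ℝ | ∃ y ∈ frontier K, r = 1 - ⟪ν y, x - y⟫_ℝ} := if_neg hx

variable (hK : IsClosed K) (hν₁ : ∀ y ∈ frontier K, ‖ν y‖ ≤ 1)
  (hνK : ∀ y ∈ frontier K, ∀ x ∈ K, ⟪ν y, x - y⟫_ℝ ≤ 0)
include hK hν₁ hνK

theorem quasiIndicator_le_one_sub_inner {y : E} (hy : y ∈ frontier K) (x : E) :
    quasiIndicator K ν x ≤ 1 - ⟪ν y, x - y⟫_ℝ := by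
  by_cases hx : x ∈ K
  · rw [quasiIndicator_of_mem hx]
    linarith [hνK y hy x hx]
  rw [quasiIndicator_of_notMem hx]
  refine csInf_le ⟨1 - ‖x - y‖, ?_⟩ ⟨y, hy, rfl⟩
  rintro _ ⟨y', hy', rfl⟩
  have hnormal : ⟪ν y', y - y'⟫_ℝ ≤ 0 := hνK y' hy' y (hK.frontier_subset hy)
  have hbound : ⟪ν y', x - y⟫_ℝ ≤ ‖x - y‖ :=
    (real_inner_le_norm _ _).trans (mul_le_of_le_one_left (norm_nonneg _) (hν₁ y' hy'))
  rw [← sub_add_sub_cancel x y y', inner_add_right]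
  linarith

theorem mul_quasiIndicator_add_mul_quasiIndicator_le {y : E} (hy : y ∈ frontier K)
    {a b : ℝ} (ha : 0 ≤ a) (hb : 0 ≤ b) (hab : a + b = 1) (x z : E) :
    a * quasiIndicator K ν x + b * quasiIndicator K ν z ≤ 1 - ⟪ν y, (a • x + b • z) - y⟫_ℝ := by
  have hx := mul_le_mul_of_nonneg_left (quasiIndicator_le_one_sub_inner hK hν₁ hνK hy x) ha
  have hz := mul_le_mul_of_nonneg_left (quasiIndicator_le_one_sub_inner hK hν₁ hνK hy z) hb
  rw [inner_convexCombo_sub hab]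
  linear_combination hx + hz + hab

theorem quasiIndicator_le_one_of_mem_interior {w : E} (hw : w ∈ interior K) (x : E) :
    quasiIndicator K ν x ≤ 1 := by
  by_cases hx : x ∈ K
  · exact (quasiIndicator_of_mem hx).le
  obtain ⟨y, hyseg, hy⟩ := (convex_segment x w).isPreconnected.inter_frontier_nonempty
    ⟨w, right_mem_segment ℝ x w, interior_subset hw⟩ ⟨x, left_mem_segment ℝ x w, hx⟩
  have hyw : y ≠ w := fun h => hy.2 (h ▸ hw)
  have hacute := inner_sub_nonneg_of_mem_segment hyseg hyw (hνK y hy w (interior_subset hw))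
  linarith [quasiIndicator_le_one_sub_inner hK hν₁ hνK hy x]

end InnerProductSpace

open Classical in
theorem quasi_indicator_concave_general (n : ℕ)
    (K : Set (EuclideanSpace ℝ (Fin n)))
    (hK : IsClosed K)
    (hbd : (frontier K).Nonempty)
    (ν : EuclideanSpace ℝ (Fin n) → EuclideanSpace ℝ (Fin n))
    (hν : ∀ y ∈ frontier K, ‖ν y‖ = 1 ∧ ∀ x ∈ K, ⟪ν y, x - y⟫_ℝ ≤ 0)
    (f : EuclideanSpace ℝ (Fin n) → ℝ)
    (hf : ∀ x, f x = if x ∈ K then 1 else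
      sInf {r : ℝ | ∃ y ∈ frontier K, r = 1 - ⟪ν y, x - y⟫_ℝ}) :
    ConcaveOn ℝ Set.univ f := by
  obtain rfl : f = quasiIndicator K ν := funext hf
  have hν₁ : ∀ y ∈ frontier K, ‖ν y‖ ≤ 1 := fun y hy => (hν y hy).1.le
  have hνK : ∀ y ∈ frontier K, ∀ x ∈ K, ⟪ν y, x - y⟫_ℝ ≤ 0 := fun y hy => (hν y hy).2
  refine ⟨convex_univ, fun x _ z _ a b ha hb hab => ?_⟩
  have hcombo {y} (hy : y ∈ frontier K) :=
    mul_quasiIndicator_add_mul_quasiIndicator_le hK hν₁ hνK hy ha hb hab x z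
  simp only [smul_eq_mul]
  by_cases hw : a • x + b • z ∈ K
  · rw [quasiIndicator_of_mem hw]
    by_cases hint : a • x + b • z ∈ interior K
    · have hx := quasiIndicator_le_one_of_mem_interior hK hν₁ hνK hint x
      have hz := quasiIndicator_le_one_of_mem_interior hK hν₁ hνK hint z
      nlinarith
    · simpa using hcombo ⟨subset_closure hw, hint⟩
  · rw [quasiIndicator_of_notMem hw]
    obtain ⟨p, hp⟩ := hbd
    refine le_csInf ⟨_, p, hp, rfl⟩ ?_
    rintro _ ⟨y, hy, rfl⟩
    exact hcombo hy

open Classical in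
/-- The quasi-indicator of a closed convex set `K` with respect to a selection
`ν` of unit outer normals at boundary points (equal to `1` on `K`, and to
`inf_{y ∈ Bd K} (1 − ⟪ν y, x − y⟫)` outside) is concave. -/
theorem quasi_indicator_concave (n : ℕ)
    (K : Set (EuclideanSpace ℝ (Fin n)))
    (hK : IsClosed K) (hKconv : Convex ℝ K)
    (hbd : (frontier K).Nonempty)
    (ν : EuclideanSpace ℝ (Fin n) → EuclideanSpace ℝ (Fin n))
    (hν : ∀ y ∈ frontier K, ‖ν y‖ = 1 ∧ ∀ x ∈ K, ⟪ν y, x - y⟫_ℝ ≤ 0)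
    (f : EuclideanSpace ℝ (Fin n) → ℝ)
    (hf : ∀ x, f x = if x ∈ K then 1 else
      sInf {r : ℝ | ∃ y ∈ frontier K, r = 1 - ⟪ν y, x - y⟫_ℝ}) :
    ConcaveOn ℝ Set.univ f :=
  quasi_indicator_concave_general n K hK hbd ν hν f hf
end

section
/- Let H = {x ∈ ℝ^n : a·x ≤ 0} be a halfspace through the origin (a ≠ 0), h a nonnegative spherically symmetric C^k mollifier supported in B(0, ε) with ∫ h = 1, and α = ∫ q-ind_H(x − c) h(c) dc evaluated at any x ∈ Bd(H). Then for f = q-ind_H ∗ h, the level set {x : f(x) ≥ α} equals H. -/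
/-!
Writing `ℓ x = ⟪a, x⟫ / ‖a‖`, the convolution is `f x = ∫ h - g (ℓ x)` with
`g t = ∫ max 0 (t - ℓ c) * h c dc`, the ramp `t ↦ max 0 t` smoothed along `ℓ`. The function `g`
is nondecreasing, and since `h` is even the halfspace `{ℓ ≤ 0}` carries at least half of its
mass; there the ramp has slope one, so `g t ≥ g 0 + t / 2` for `t ≥ 0`. Hence `f x ≥ f x₀`
exactly when `ℓ x ≤ 0`.
-/

open MeasureTheory Set
open scoped InnerProductSpace

section

variable {E : Type*} [NormedAddCommGroup E] [NormedSpace ℝ E] [MeasurableSpace E] [BorelSpace E]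
  {μ : Measure E} {ℓ : E →L[ℝ] ℝ} {h : E → ℝ} {ε : ℝ}

variable (μ ℓ h) in
noncomputable def smoothedRamp (t : ℝ) : ℝ := ∫ c, max 0 (t - ℓ c) * h c ∂μ

theorem integrable_ramp_mul (hh : Integrable h μ) (hsupp : Function.support h ⊆ Metric.ball 0 ε)
    (t : ℝ) : Integrable (fun c ↦ max 0 (t - ℓ c) * h c) μ := by
  refine (hh.norm.const_mul (|t| + ‖ℓ‖ * ε)).mono' ?_ (ae_of_all _ fun c ↦ ?_)
  · exact (continuous_const.max (continuous_const.sub ℓ.continuous)).aestronglyMeasurable.mul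
      hh.aestronglyMeasurable
  by_cases hc : h c = 0
  · simp [hc]
  have hℓc : |ℓ c| ≤ ‖ℓ‖ * ε := by
    have hcε : ‖c‖ < ε := by simpa using hsupp hc
    exact (ℓ.le_opNorm c).trans (by gcongr)
  rw [norm_mul, Real.norm_eq_abs, abs_of_nonneg (le_max_left _ _)]
  gcongr
  exact max_le (by linarith [abs_nonneg t, abs_nonneg (ℓ c)])
    (by linarith [le_abs_self t, neg_abs_le (ℓ c)])

theorem smoothedRamp_mono (hh : Integrable h μ) (hsupp : Function.support h ⊆ Metric.ball 0 ε)
    (h0 : ∀ c, 0 ≤ h c) : Monotone (smoothedRamp μ ℓ h) := fun s t hst ↦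
  integral_mono (integrable_ramp_mul hh hsupp s) (integrable_ramp_mul hh hsupp t) fun c ↦ by
    gcongr
    exact h0 c

theorem setIntegral_nonneg_eq_setIntegral_nonpos [μ.IsNegInvariant] (hsym : ∀ c, h (-c) = h c) :
    ∫ c in {c | 0 ≤ ℓ c}, h c ∂μ = ∫ c in {c | ℓ c ≤ 0}, h c ∂μ := by
  rw [← integral_indicator (measurableSet_le measurable_const ℓ.measurable),
    ← integral_indicator (measurableSet_le ℓ.measurable measurable_const), ← integral_neg_eq_self]
  congr 1
  ext c
  simp [indicator_apply, hsym]

theorem integral_le_two_mul_setIntegral_nonpos [μ.IsNegInvariant] (hh : Integrable h μ)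
    (h0 : ∀ c, 0 ≤ h c) (hsym : ∀ c, h (-c) = h c) :
    ∫ c, h c ∂μ ≤ 2 * ∫ c in {c | ℓ c ≤ 0}, h c ∂μ := by
  have hcompl : ∫ c in {c | ℓ c ≤ 0}ᶜ, h c ∂μ ≤ ∫ c in {c | 0 ≤ ℓ c}, h c ∂μ :=
    setIntegral_mono_set hh.integrableOn (ae_of_all _ h0)
      (LE.le.eventuallyLE fun c (hc : ¬ℓ c ≤ 0) ↦ (not_le.1 hc).le)
  rw [← integral_add_compl (measurableSet_le ℓ.measurable measurable_const) hh]
  linarith [setIntegral_nonneg_eq_setIntegral_nonpos (μ := μ) (ℓ := ℓ) hsym]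

theorem smoothedRamp_zero_add_le (hh : Integrable h μ)
    (hsupp : Function.support h ⊆ Metric.ball 0 ε) (h0 : ∀ c, 0 ≤ h c) {t : ℝ} (ht : 0 ≤ t) :
    smoothedRamp μ ℓ h 0 + t * ∫ c in {c | ℓ c ≤ 0}, h c ∂μ ≤ smoothedRamp μ ℓ h t := by
  have hS : MeasurableSet {c | ℓ c ≤ 0} := measurableSet_le ℓ.measurable measurable_const
  have hindicator : Integrable ({c | ℓ c ≤ 0}.indicator fun c ↦ t * h c) μ :=
    (hh.const_mul t).indicator hS
  rw [← integral_const_mul, ← integral_indicator hS, smoothedRamp, smoothedRamp,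
    ← integral_add (integrable_ramp_mul hh hsupp 0) hindicator]
  refine integral_mono ((integrable_ramp_mul hh hsupp 0).add hindicator)
    (integrable_ramp_mul hh hsupp t) fun c ↦ ?_
  by_cases hc : ℓ c ≤ 0
  · rw [indicator_of_mem (show c ∈ {c | ℓ c ≤ 0} from hc), max_eq_right (by linarith),
      max_eq_right (by linarith)]
    linarith
  · rw [indicator_of_notMem (show c ∉ {c | ℓ c ≤ 0} from hc), max_eq_left (by linarith)]
    simpa using mul_nonneg (le_max_left 0 (t - ℓ c)) (h0 c)

theorem smoothedRamp_le_smoothedRamp_zero_iff [μ.IsNegInvariant]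
    (hsupp : Function.support h ⊆ Metric.ball 0 ε) (h0 : ∀ c, 0 ≤ h c)
    (hsym : ∀ c, h (-c) = h c) (hmass : 0 < ∫ c, h c ∂μ) {t : ℝ} :
    smoothedRamp μ ℓ h t ≤ smoothedRamp μ ℓ h 0 ↔ t ≤ 0 := by
  have hh : Integrable h μ := .of_integral_ne_zero hmass.ne'
  refine ⟨fun hle ↦ not_lt.1 fun ht ↦ ?_, fun ht ↦ smoothedRamp_mono hh hsupp h0 ht⟩
  have hhalf := integral_le_two_mul_setIntegral_nonpos (ℓ := ℓ) hh h0 hsym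
  nlinarith [smoothedRamp_zero_add_le (ℓ := ℓ) hh hsupp h0 ht.le]

theorem integral_one_sub_ramp_mul (hh : Integrable h μ)
    (hsupp : Function.support h ⊆ Metric.ball 0 ε) (x : E) :
    ∫ c, (1 - max 0 (ℓ (x - c))) * h c ∂μ = ∫ c, h c ∂μ - smoothedRamp μ ℓ h (ℓ x) := by
  simp only [map_sub, sub_mul, one_mul]
  exact integral_sub hh (integrable_ramp_mul hh hsupp _)

theorem setOf_le_integral_one_sub_ramp_mul [μ.IsNegInvariant]
    (hsupp : Function.support h ⊆ Metric.ball 0 ε) (h0 : ∀ c, 0 ≤ h c)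
    (hsym : ∀ c, h (-c) = h c) (hmass : 0 < ∫ c, h c ∂μ) {x₀ : E} (hx₀ : ℓ x₀ = 0) :
    {x | ∫ c, (1 - max 0 (ℓ (x₀ - c))) * h c ∂μ ≤ ∫ c, (1 - max 0 (ℓ (x - c))) * h c ∂μ} =
      {x | ℓ x ≤ 0} := by
  have hh : Integrable h μ := .of_integral_ne_zero hmass.ne'
  ext x
  simp only [mem_ofPred_eq, integral_one_sub_ramp_mul hh hsupp, hx₀, sub_le_sub_iff_left]
  exact smoothedRamp_le_smoothedRamp_zero_iff hsupp h0 hsym hmass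

end

theorem halfspace_convolution_level_set_general (n : ℕ)
    (a : EuclideanSpace ℝ (Fin n))
    (qind : EuclideanSpace ℝ (Fin n) → ℝ)
    (hqind : ∀ x, qind x = 1 - max 0 (⟪a, x⟫_ℝ / ‖a‖))
    (h : EuclideanSpace ℝ (Fin n) → ℝ)
    (hh0 : ∀ x, 0 ≤ h x)
    (hhsym : ∀ x y : EuclideanSpace ℝ (Fin n), ‖x‖ = ‖y‖ → h x = h y)
    (ε : ℝ)
    (hhsupp : Function.support h ⊆ Metric.ball 0 ε)
    (hhmass : ∫ x, h x = 1)
    (f : EuclideanSpace ℝ (Fin n) → ℝ)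
    (hf : ∀ x, f x = ∫ c, qind (x - c) * h c)
    (x₀ : EuclideanSpace ℝ (Fin n)) (hx₀ : ⟪a, x₀⟫_ℝ = 0)
    (α : ℝ) (hα : α = f x₀) :
    {x : EuclideanSpace ℝ (Fin n) | α ≤ f x} =
      {x : EuclideanSpace ℝ (Fin n) | ⟪a, x⟫_ℝ ≤ 0} := by
  set ℓ : EuclideanSpace ℝ (Fin n) →L[ℝ] ℝ := ‖a‖⁻¹ • innerSL ℝ a
  have hℓ (x) : ℓ x = ⟪a, x⟫_ℝ / ‖a‖ := by simp [ℓ, div_eq_inv_mul]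
  have hfℓ (x) : f x = ∫ c, (1 - max 0 (ℓ (x - c))) * h c := by simp only [hf, hqind, hℓ]
  have hsym (c) : h (-c) = h c := hhsym _ _ (norm_neg c)
  calc {x | α ≤ f x} = {x | ℓ x ≤ 0} := by
        simp only [hα, hfℓ]
        exact setOf_le_integral_one_sub_ramp_mul hhsupp hh0 hsym (by simp [hhmass])
          (by simp [hℓ, hx₀])
    _ = {x | ⟪a, x⟫_ℝ ≤ 0} := by
        ext x
        rcases eq_or_ne a 0 with rfl | ha
        · simp [hℓ]
        · simp [hℓ, div_nonpos_iff, ha]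

/-- Smoothing Lemma for a halfspace: if `H = {x : ⟪a,x⟫ ≤ 0}` is a halfspace
through the origin, `h` a nonnegative spherically symmetric `C^k` mollifier
supported in `B(0,ε)` of unit mass, `f = q-ind_H ∗ h`, and `α` is the value of
`f` at a boundary point of `H`, then `{x : f x ≥ α} = H`. -/
theorem halfspace_convolution_level_set (n : ℕ) (k : ℕ)
    (a : EuclideanSpace ℝ (Fin n)) (ha : a ≠ 0)
    (qind : EuclideanSpace ℝ (Fin n) → ℝ)
    (hqind : ∀ x, qind x = 1 - max 0 (⟪a, x⟫_ℝ / ‖a‖))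
    (h : EuclideanSpace ℝ (Fin n) → ℝ)
    (hh0 : ∀ x, 0 ≤ h x)
    (hhsmooth : ContDiff ℝ (k : ℕ∞) h)
    (hhsym : ∀ x y : EuclideanSpace ℝ (Fin n), ‖x‖ = ‖y‖ → h x = h y)
    (ε : ℝ) (hε : 0 < ε)
    (hhsupp : Function.support h ⊆ Metric.ball 0 ε)
    (hhmass : ∫ x, h x = 1)
    (f : EuclideanSpace ℝ (Fin n) → ℝ)
    (hf : ∀ x, f x = ∫ c, qind (x - c) * h c)
    (x₀ : EuclideanSpace ℝ (Fin n)) (hx₀ : ⟪a, x₀⟫_ℝ = 0)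
    (α : ℝ) (hα : α = f x₀) :
    {x : EuclideanSpace ℝ (Fin n) | α ≤ f x} =
      {x : EuclideanSpace ℝ (Fin n) | ⟪a, x⟫_ℝ ≤ 0} :=
  halfspace_convolution_level_set_general n a qind hqind h hh0 hhsym ε hhsupp hhmass f hf x₀ hx₀ α
    hα
end

section
/- With notation as in the Smoothing Lemma, let x ∈ Bd(K) be such that B(x, ε) ∩ K = H_x ∩ B(x, ε) for some supporting halfspace H_x of K at x (local flatness). Then (q-ind_K ∗ h)(x) = α, where α is the common value of q-ind_H ∗ h on the boundary of a halfspace. -/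
/-!
Inside `B(x, ε)` the set `K` coincides with the halfspace `⟪u, · - x⟫ ≤ 0`, and `h` is supported in
`B(0, ε)`, so only points `x - c` with `‖c‖ < ε` enter the convolution. Local flatness forces the unit
normal at `x` to be `u`. If `⟪u, c⟫ ≥ 0`, then `x - c ∈ K` and the quasi-indicator is `1`. Otherwise
`x - c` lies at distance `-⟪u, c⟫` from its projection onto the hyperplane, which is a point of `K`;
hence no supporting halfspace of `K` separates `x - c` by more than `-⟪u, c⟫`, and the one at `x`
does so exactly. Thus `q-ind_K (x - c) = 1 - max 0 (-⟪u, c⟫)` on the support of `h`, which is the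
integrand defining `α`.
-/

open MeasureTheory
open scoped InnerProductSpace

section InnerProductSpace

variable {E : Type*} [NormedAddCommGroup E] [InnerProductSpace ℝ E]

theorem eq_of_halfBall_subset_halfspace {u v : E} {ε : ℝ} (hε : 0 < ε)
    (hu : ‖u‖ = 1) (hv : ‖v‖ = 1)
    (huv : ∀ w, ⟪u, w⟫_ℝ ≤ 0 → ‖w‖ ≤ ε → ⟪v, w⟫_ℝ ≤ 0) : v = u := by
  -- test the hypothesis on a short multiple of `v - u`, which lies in the halfspace of `u`
  set t := ε / 2
  have ht : 0 < t := by positivity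
  have hu_vu : ⟪u, v - u⟫_ℝ ≤ 0 := by
    have := real_inner_le_norm u v
    rw [hu, hv] at this
    rw [inner_sub_right, real_inner_self_eq_norm_sq, hu]
    linarith
  have hnorm : ‖t • (v - u)‖ ≤ ε := by
    rw [norm_smul, Real.norm_of_nonneg ht.le]
    calc t * ‖v - u‖ ≤ t * (‖v‖ + ‖u‖) := by gcongr; exact norm_sub_le v u
      _ = ε := by rw [hu, hv]; ring
  have hv_vu : ⟪v, v - u⟫_ℝ ≤ 0 := by
    have := huv _ (by rw [real_inner_smul_right]; exact mul_nonpos_of_nonneg_of_nonpos ht.le hu_vu)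
      hnorm
    rw [real_inner_smul_right] at this
    exact nonpos_of_mul_nonpos_right this ht
  rw [inner_sub_right, real_inner_self_eq_norm_sq, hv] at hv_vu
  have hle : ⟪v, u⟫_ℝ ≤ 1 := by simpa [hu, hv] using real_inner_le_norm v u
  exact (inner_eq_one_iff_of_norm_eq_one (𝕜 := ℝ) hv hu).mp (by linarith)

theorem norm_sub_inner_smul_le {u : E} (hu : ‖u‖ = 1) (c : E) : ‖c - ⟪u, c⟫_ℝ • u‖ ≤ ‖c‖ := by
  have hsq : ‖c - ⟪u, c⟫_ℝ • u‖ ^ 2 = ‖c‖ ^ 2 - ⟪u, c⟫_ℝ ^ 2 := by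
    rw [norm_sub_sq_real, real_inner_smul_right, norm_smul, Real.norm_eq_abs, hu,
      real_inner_comm]
    ring_nf
    rw [sq_abs]
    ring
  exact pow_le_pow_iff_left₀ (norm_nonneg _) (norm_nonneg _) two_ne_zero |>.mp
    (by rw [hsq]; nlinarith [sq_nonneg ⟪u, c⟫_ℝ])

end InnerProductSpace

section LocallyFlat

variable {E : Type*} [NormedAddCommGroup E] [InnerProductSpace ℝ E]
  {K : Set E} {ν : E → E} {x u : E} {ε : ℝ}

theorem mem_of_inner_nonpos_of_locallyFlat
    (hflat : Metric.closedBall x ε ∩ K = Metric.closedBall x ε ∩ {z | ⟪u, z - x⟫_ℝ ≤ 0})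
    {z : E} (hz : ⟪u, z - x⟫_ℝ ≤ 0) (hzx : ‖z - x‖ ≤ ε) : z ∈ K :=
  (hflat ▸ ⟨mem_closedBall_iff_norm.mpr hzx, hz⟩ : z ∈ Metric.closedBall x ε ∩ K).2

theorem eq_of_normal_of_locallyFlat {v : E} (hε : 0 < ε) (hu : ‖u‖ = 1) (hv : ‖v‖ = 1)
    (hvK : ∀ z ∈ K, ⟪v, z - x⟫_ℝ ≤ 0)
    (hflat : Metric.closedBall x ε ∩ K = Metric.closedBall x ε ∩ {z | ⟪u, z - x⟫_ℝ ≤ 0}) :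
    v = u := by
  refine eq_of_halfBall_subset_halfspace hε hu hv fun w hw hwε => ?_
  have hxw : x + w ∈ K :=
    mem_of_inner_nonpos_of_locallyFlat hflat (by rwa [add_sub_cancel_left])
      (by rwa [add_sub_cancel_left])
  simpa using hvK _ hxw

theorem sInf_supportGap_eq
    (hν : ∀ y ∈ frontier K, ‖ν y‖ = 1 ∧ ∀ z ∈ K, ⟪ν y, z - y⟫_ℝ ≤ 0)
    (hx : x ∈ frontier K) {p q : E} (hq : q ∈ K) (hpq : ‖p - q‖ ≤ ⟪ν x, p - x⟫_ℝ) :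
    sInf {r : ℝ | ∃ y ∈ frontier K, r = 1 - ⟪ν y, p - y⟫_ℝ} = 1 - ⟪ν x, p - x⟫_ℝ := by
  refine IsLeast.csInf_eq ⟨⟨x, hx, rfl⟩, ?_⟩
  rintro _ ⟨y, hy, rfl⟩
  have hsplit : ⟪ν y, p - y⟫_ℝ = ⟪ν y, p - q⟫_ℝ + ⟪ν y, q - y⟫_ℝ := by
    rw [← inner_add_right, sub_add_sub_cancel]
  have hpq' : ⟪ν y, p - q⟫_ℝ ≤ ‖p - q‖ := by
    simpa [(hν y hy).1] using real_inner_le_norm (ν y) (p - q)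
  linarith [(hν y hy).2 q hq]

open Classical in
theorem quasiIndicator_sub_eq_of_locallyFlat
    (hν : ∀ y ∈ frontier K, ‖ν y‖ = 1 ∧ ∀ z ∈ K, ⟪ν y, z - y⟫_ℝ ≤ 0)
    (hx : x ∈ frontier K) (hu : ‖u‖ = 1) (hνx : ν x = u)
    (hsupp : K ⊆ {z | ⟪u, z - x⟫_ℝ ≤ 0})
    (hflat : Metric.closedBall x ε ∩ K = Metric.closedBall x ε ∩ {z | ⟪u, z - x⟫_ℝ ≤ 0})
    {c : E} (hc : ‖c‖ ≤ ε) :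
    (if x - c ∈ K then 1 else sInf {r : ℝ | ∃ y ∈ frontier K, r = 1 - ⟪ν y, x - c - y⟫_ℝ}) =
      1 - max 0 (-⟪u, c⟫_ℝ) := by
  have hpx : x - c - x = -c := sub_sub_cancel_left x c
  rcases le_or_gt 0 ⟪u, c⟫_ℝ with hs | hs
  · have hmem : x - c ∈ K :=
      mem_of_inner_nonpos_of_locallyFlat hflat (by simpa [hpx] using hs) (by simpa [hpx] using hc)
    rw [if_pos hmem, max_eq_left (by linarith)]
    ring
  · have hnmem : x - c ∉ K := fun hmem => by
      have := hsupp hmem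
      simp only [Set.mem_ofPred_eq, hpx, inner_neg_right] at this
      linarith
    -- the projection `q` of `x - c` onto the hyperplane lies in `K`, at distance `-⟪u, c⟫`
    set q := x - (c - ⟪u, c⟫_ℝ • u)
    have hqK : q ∈ K := by
      refine mem_of_inner_nonpos_of_locallyFlat hflat ?_ ?_
      · simp [q, inner_sub_right, real_inner_smul_right, hu]
      · rw [sub_sub_cancel_left, norm_neg]
        exact (norm_sub_inner_smul_le hu c).trans hc
    have hpq : ‖x - c - q‖ ≤ ⟪ν x, x - c - x⟫_ℝ := by
      have : x - c - q = -(⟪u, c⟫_ℝ • u) := by simp only [q]; abel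
      rw [this, hνx, hpx, norm_neg, norm_smul, hu, inner_neg_right, Real.norm_of_nonpos hs.le]
      simp
    rw [if_neg hnmem, sInf_supportGap_eq hν hx hqK hpq, hνx, hpx, inner_neg_right,
      max_eq_right (by linarith)]

end LocallyFlat

open Classical in
theorem convolution_flat_boundary_value_general (n : ℕ)
    (K : Set (EuclideanSpace ℝ (Fin n)))
    (ν : EuclideanSpace ℝ (Fin n) → EuclideanSpace ℝ (Fin n))
    (hν : ∀ y ∈ frontier K, ‖ν y‖ = 1 ∧ ∀ z ∈ K, ⟪ν y, z - y⟫_ℝ ≤ 0)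
    (qind : EuclideanSpace ℝ (Fin n) → ℝ)
    (hqind : ∀ x, qind x = if x ∈ K then 1 else
      sInf {r : ℝ | ∃ y ∈ frontier K, r = 1 - ⟪ν y, x - y⟫_ℝ})
    (h : EuclideanSpace ℝ (Fin n) → ℝ)
    (ε : ℝ) (hε : 0 < ε)
    (hhsupp : Function.support h ⊆ Metric.ball 0 ε)
    (x : EuclideanSpace ℝ (Fin n)) (hx : x ∈ frontier K)
    (u : EuclideanSpace ℝ (Fin n)) (hu : ‖u‖ = 1)
    (hsupp : K ⊆ {z : EuclideanSpace ℝ (Fin n) | ⟪u, z - x⟫_ℝ ≤ 0})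
    (hflat : Metric.closedBall x ε ∩ K =
      Metric.closedBall x ε ∩ {z : EuclideanSpace ℝ (Fin n) | ⟪u, z - x⟫_ℝ ≤ 0})
    (α : ℝ) (hα : α = ∫ c, (1 - max 0 (-⟪u, c⟫_ℝ)) * h c) :
    (∫ c, qind (x - c) * h c) = α := by
  have hνx : ν x = u := eq_of_normal_of_locallyFlat hε hu (hν x hx).1 (hν x hx).2 hflat
  rw [hα]
  congr 1 with c
  by_cases hc : h c = 0
  · simp [hc]
  have hcε : ‖c‖ ≤ ε := le_of_lt <| by simpa using hhsupp hc
  rw [hqind, quasiIndicator_sub_eq_of_locallyFlat hν hx hu hνx hsupp hflat hcε]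

open Classical in
/-- Smoothing Lemma (iii): if the boundary of the closed convex set `K` is
locally flat at `x` (i.e. `B(x,ε) ∩ K = B(x,ε) ∩ H_x` for a supporting
halfspace `H_x` at `x`), then the convolution `q-ind_K ∗ h` takes the value
`α` at `x`, where `α` is the common value of `q-ind_H ∗ h` on the boundary
of a halfspace. -/
theorem convolution_flat_boundary_value (n : ℕ) (k : ℕ)
    (K : Set (EuclideanSpace ℝ (Fin n)))
    (hK : IsClosed K) (hKconv : Convex ℝ K)
    (ν : EuclideanSpace ℝ (Fin n) → EuclideanSpace ℝ (Fin n))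
    (hν : ∀ y ∈ frontier K, ‖ν y‖ = 1 ∧ ∀ z ∈ K, ⟪ν y, z - y⟫_ℝ ≤ 0)
    (qind : EuclideanSpace ℝ (Fin n) → ℝ)
    (hqind : ∀ x, qind x = if x ∈ K then 1 else
      sInf {r : ℝ | ∃ y ∈ frontier K, r = 1 - ⟪ν y, x - y⟫_ℝ})
    (h : EuclideanSpace ℝ (Fin n) → ℝ)
    (hh0 : ∀ x, 0 ≤ h x)
    (hhsmooth : ContDiff ℝ (k : ℕ∞) h)
    (hhsym : ∀ x y : EuclideanSpace ℝ (Fin n), ‖x‖ = ‖y‖ → h x = h y)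
    (ε : ℝ) (hε : 0 < ε)
    (hhsupp : Function.support h ⊆ Metric.ball 0 ε)
    (hhmass : ∫ x, h x = 1)
    (x : EuclideanSpace ℝ (Fin n)) (hx : x ∈ frontier K)
    (u : EuclideanSpace ℝ (Fin n)) (hu : ‖u‖ = 1)
    (hsupp : K ⊆ {z : EuclideanSpace ℝ (Fin n) | ⟪u, z - x⟫_ℝ ≤ 0})
    (hflat : Metric.closedBall x ε ∩ K =
      Metric.closedBall x ε ∩ {z : EuclideanSpace ℝ (Fin n) | ⟪u, z - x⟫_ℝ ≤ 0})
    (α : ℝ) (hα : α = ∫ c, (1 - max 0 (-⟪u, c⟫_ℝ)) * h c) :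
    (∫ c, qind (x - c) * h c) = α :=
  convolution_flat_boundary_value_general n K ν hν qind hqind h ε hε hhsupp x hx u hu hsupp hflat α
    hα
end

section
/- Let x be a boundary point of K ⊕ εB where K ⊆ ℝ^n is closed convex and ε > 0. Then there exists y ∈ Bd(K) with ‖x − y‖ = ε, the ball B(y, ε) is contained in K ⊕ εB, and the unique unit outer normal to K ⊕ εB at x is (x − y)/ε. -/
open scoped InnerProductSpace
open Metric Set Filter Topology

/-! Let `y` be the metric projection of `x` onto `K`, characterized by `⟪x - y, w - y⟫ ≤ 0` for
`w ∈ K`. The open ball `B(y, ε)` is interior to `K ⊕ εB`, so `‖x - y‖ = ε`. The obtuse-angle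
inequality shows that `y ∉ int K` and that `x - y` is an outer normal of `K ⊕ εB` at `x`;
conversely `B(y, ε) ⊆ K ⊕ εB` touches the boundary at `x`, so any unit outer normal of
`K ⊕ εB` there is one of the ball, i.e. the radial vector `(x - y)/ε`. -/

def outerParallelBody {E : Type*} [SeminormedAddCommGroup E] (K : Set E) (ε : ℝ) : Set E :=
  {z | ∃ y ∈ K, ‖z - y‖ ≤ ε}

section ParallelBody

variable {E : Type*} [SeminormedAddCommGroup E] {K : Set E} {x y : E} {ε : ℝ}

theorem closedBall_subset_outerParallelBody (hy : y ∈ K) :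
    closedBall y ε ⊆ outerParallelBody K ε :=
  fun z hz => ⟨y, hy, by rwa [mem_closedBall, dist_eq_norm] at hz⟩

theorem ball_subset_interior_outerParallelBody (hy : y ∈ K) :
    ball y ε ⊆ interior (outerParallelBody K ε) :=
  interior_maximal (ball_subset_closedBall.trans (closedBall_subset_outerParallelBody hy))
    isOpen_ball

theorem norm_sub_le_of_mem_closure_outerParallelBody (hmin : ∀ w ∈ K, ‖x - y‖ ≤ ‖x - w‖)
    (hx : x ∈ closure (outerParallelBody K ε)) : ‖x - y‖ ≤ ε := by
  refine le_of_forall_pos_lt_add fun δ hδ => ?_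
  obtain ⟨z, ⟨w, hwK, hzw⟩, hxz⟩ := Metric.mem_closure_iff.mp hx δ hδ
  rw [dist_eq_norm] at hxz
  calc ‖x - y‖ ≤ ‖x - w‖ := hmin w hwK
    _ ≤ ‖x - z‖ + ‖z - w‖ := norm_sub_le_norm_sub_add_norm_sub x z w
    _ < ε + δ := by linarith

theorem norm_sub_eq_of_mem_frontier_outerParallelBody (hy : y ∈ K)
    (hmin : ∀ w ∈ K, ‖x - y‖ ≤ ‖x - w‖) (hx : x ∈ frontier (outerParallelBody K ε)) :
    ‖x - y‖ = ε := by
  refine le_antisymm (norm_sub_le_of_mem_closure_outerParallelBody hmin hx.1) (not_lt.mp ?_)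
  intro hlt
  exact hx.2 (ball_subset_interior_outerParallelBody hy (by rwa [mem_ball, dist_eq_norm]))

end ParallelBody

section InnerProduct

variable {E : Type*} [NormedAddCommGroup E] [InnerProductSpace ℝ E] {K : Set E} {x y : E}
  {ε : ℝ}

theorem norm_sub_le_norm_sub_of_inner_sub_nonpos (hproj : ∀ w ∈ K, ⟪x - y, w - y⟫_ℝ ≤ 0)
    {w : E} (hw : w ∈ K) : ‖x - y‖ ≤ ‖x - w‖ := by
  have hsq : ‖x - w‖ ^ 2 = ‖x - y‖ ^ 2 - 2 * ⟪x - y, w - y⟫_ℝ + ‖w - y‖ ^ 2 := by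
    rw [← norm_sub_sq_real, sub_sub_sub_cancel_right]
  have := hproj w hw
  exact le_of_sq_le_sq (by nlinarith [sq_nonneg ‖w - y‖]) (norm_nonneg _)

/-- Pushing `y` slightly towards `x` would violate the angle condition. -/
theorem notMem_interior_of_inner_sub_nonpos (hxy : x ≠ y)
    (hproj : ∀ w ∈ K, ⟪x - y, w - y⟫_ℝ ≤ 0) : y ∉ interior K := by
  intro hy
  have hpath : Tendsto (fun t : ℝ => y + t • (x - y)) (𝓝[>] 0) (𝓝 y) := by
    have : Continuous fun t : ℝ => y + t • (x - y) := by fun_prop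
    simpa using (this.tendsto 0).mono_left nhdsWithin_le_nhds
  obtain ⟨t, htK, ht⟩ :=
    ((hpath.eventually (mem_interior_iff_mem_nhds.mp hy)).and self_mem_nhdsWithin).exists
  have hpos : 0 < ⟪x - y, (y + t • (x - y)) - y⟫_ℝ := by
    rw [add_sub_cancel_left, real_inner_smul_right, real_inner_self_eq_norm_sq]
    exact mul_pos ht (pow_pos (norm_pos_iff.mpr (sub_ne_zero.mpr hxy)) 2)
  exact (hproj _ htK).not_gt hpos

theorem inner_sub_nonpos_of_mem_outerParallelBody (hproj : ∀ w ∈ K, ⟪x - y, w - y⟫_ℝ ≤ 0)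
    (hxy : ‖x - y‖ = ε) {z : E} (hz : z ∈ outerParallelBody K ε) : ⟪x - y, z - x⟫_ℝ ≤ 0 := by
  obtain ⟨w, hwK, hzw⟩ := hz
  have hsplit : ⟪x - y, z - x⟫_ℝ = ⟪x - y, z - w⟫_ℝ + ⟪x - y, w - y⟫_ℝ - ‖x - y‖ ^ 2 := by
    rw [← real_inner_self_eq_norm_sq, ← inner_add_right, ← inner_sub_right]
    congr 1
    abel
  have hcs : ⟪x - y, z - w⟫_ℝ ≤ ε * ε := by
    calc ⟪x - y, z - w⟫_ℝ ≤ ‖x - y‖ * ‖z - w‖ := real_inner_le_norm _ _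
      _ ≤ ε * ε := by rw [hxy]; exact mul_le_mul_of_nonneg_left hzw (hxy ▸ norm_nonneg _)
  rw [hsplit, hxy]
  linarith [hproj w hwK]

theorem eq_inv_smul_sub_of_forall_closedBall_inner_sub_nonpos (hε : 0 < ε)
    (hxy : ‖x - y‖ = ε) {u : E} (hu : ‖u‖ = 1)
    (hnormal : ∀ z ∈ closedBall y ε, ⟪u, z - x⟫_ℝ ≤ 0) : u = ε⁻¹ • (x - y) := by
  have hz : y + ε • u ∈ closedBall y ε := by
    rw [mem_closedBall, dist_eq_norm, add_sub_cancel_left, norm_smul, Real.norm_eq_abs,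
      abs_of_pos hε, hu, mul_one]
  have hval : ⟪u, y + ε • u - x⟫_ℝ = ε - ⟪u, x - y⟫_ℝ := by
    rw [show y + ε • u - x = ε • u - (x - y) by abel, inner_sub_right, real_inner_smul_right,
      real_inner_self_eq_norm_sq, hu]
    ring
  have hcs_eq : ⟪u, x - y⟫_ℝ = ‖u‖ * ‖x - y‖ := by
    refine le_antisymm (real_inner_le_norm _ _) ?_
    rw [hu, hxy, one_mul]
    linarith [hnormal _ hz]
  have hsmul := inner_eq_norm_mul_iff_real.mp hcs_eq
  rw [hu, one_smul, hxy] at hsmul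
  rw [← hsmul, smul_smul, inv_mul_cancel₀ hε.ne', one_smul]

theorem unit_normal_outerParallelBody_iff (hε : 0 < ε) (hy : y ∈ K)
    (hproj : ∀ w ∈ K, ⟪x - y, w - y⟫_ℝ ≤ 0) (hxy : ‖x - y‖ = ε) (u : E) :
    (‖u‖ = 1 ∧ ∀ z ∈ outerParallelBody K ε, ⟪u, z - x⟫_ℝ ≤ 0) ↔ u = ε⁻¹ • (x - y) := by
  constructor
  · rintro ⟨hu, hnormal⟩
    exact eq_inv_smul_sub_of_forall_closedBall_inner_sub_nonpos hε hxy hu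
      fun z hz => hnormal z (closedBall_subset_outerParallelBody hy hz)
  · rintro rfl
    refine ⟨?_, fun z hz => ?_⟩
    · rw [norm_smul, Real.norm_eq_abs, abs_of_pos (inv_pos.mpr hε), hxy, inv_mul_cancel₀ hε.ne']
    · rw [real_inner_smul_left]
      exact mul_nonpos_of_nonneg_of_nonpos (inv_nonneg.mpr hε.le)
        (inner_sub_nonpos_of_mem_outerParallelBody hproj hxy hz)

end InnerProduct

/-- Geometric core of the smoothness of outer parallel bodies: every boundary
point `x` of `K ⊕ εB` lies at distance `ε` from some boundary point `y` of
`K`, the ball `B(y,ε)` is contained in `K ⊕ εB`, and the unique unit outer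
normal to `K ⊕ εB` at `x` is `(x − y)/ε`. -/
theorem outer_parallel_body_normal_formula (n : ℕ)
    (K : Set (EuclideanSpace ℝ (Fin n)))
    (hK : IsClosed K) (hKconv : Convex ℝ K) (hKne : K.Nonempty)
    (ε : ℝ) (hε : 0 < ε)
    (Kε : Set (EuclideanSpace ℝ (Fin n)))
    (hKε : Kε = {z : EuclideanSpace ℝ (Fin n) | ∃ y ∈ K, ‖z - y‖ ≤ ε})
    (x : EuclideanSpace ℝ (Fin n)) (hx : x ∈ frontier Kε) :
    ∃ y ∈ frontier K, ‖x - y‖ = ε ∧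
      Metric.closedBall y ε ⊆ Kε ∧
      ∀ u : EuclideanSpace ℝ (Fin n),
        (‖u‖ = 1 ∧ ∀ z ∈ Kε, ⟪u, z - x⟫_ℝ ≤ 0) ↔ u = ε⁻¹ • (x - y) := by
  change Kε = outerParallelBody K ε at hKε
  subst hKε
  obtain ⟨y, hyK, hymin⟩ := exists_norm_eq_iInf_of_complete_convex hKne hK.isComplete hKconv x
  have hproj := (norm_eq_iInf_iff_real_inner_le_zero hKconv hyK).mp hymin
  have hxy : ‖x - y‖ = ε := norm_sub_eq_of_mem_frontier_outerParallelBody hyK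
    (fun w hw => norm_sub_le_norm_sub_of_inner_sub_nonpos hproj hw) hx
  have hx_ne_y : x ≠ y := fun h => by rw [h, sub_self, norm_zero] at hxy; exact hε.ne hxy
  exact ⟨y, ⟨subset_closure hyK, notMem_interior_of_inner_sub_nonpos hx_ne_y hproj⟩, hxy,
    closedBall_subset_outerParallelBody hyK, unit_normal_outerParallelBody_iff hε hyK hproj hxy⟩
end
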